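/- Let F(v) = √(49v² + 105·(1+4v+√(1+8v))/8) − 7v for v ≥ 0. Then F(22/49) = 11/2, and F(v) ≤ 11/2 for all v ≥ 0. -/

import Mathlib

/-!
With `s = √(1 + 8v)` the radicand falls short of `(11/2 + 7v)²` by exactly `(7s - 15)² / 16`,
so `F(v) ≤ 11/2`, with equality precisely when `s = 15/7`, i.e. `v = 22/49`.
-/

open Real

noncomputable def hallF (v : ℝ) : ℝ :=
  √(49 * v ^ 2 + 105 * ((1 + 4 * v + √(1 + 8 * v)) / 8)) - 7 * v

lemma hall_radicand_add_sq {v : ℝ} (hv : -1 / 8 ≤ v) :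
    49 * v ^ 2 + 105 * ((1 + 4 * v + √(1 + 8 * v)) / 8) + (7 * √(1 + 8 * v) - 15) ^ 2 / 16 =
      (11 / 2 + 7 * v) ^ 2 := by
  have hs : √(1 + 8 * v) ^ 2 = 1 + 8 * v := sq_sqrt (by linarith)
  linear_combination (49 / 16 : ℝ) * hs

lemma hallF_le {v : ℝ} (hv : -1 / 8 ≤ v) : hallF v ≤ 11 / 2 := by
  have hradicand : 49 * v ^ 2 + 105 * ((1 + 4 * v + √(1 + 8 * v)) / 8) ≤ (11 / 2 + 7 * v) ^ 2 := by
    rw [← hall_radicand_add_sq hv]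
    linarith [sq_nonneg (7 * √(1 + 8 * v) - 15)]
  have := (sqrt_le_left (by linarith : (0 : ℝ) ≤ 11 / 2 + 7 * v)).2 hradicand
  unfold hallF
  linarith

lemma hallF_eq_of_sqrt_eq {v : ℝ} (hv : -1 / 8 ≤ v) (hs : √(1 + 8 * v) = 15 / 7) :
    hallF v = 11 / 2 := by
  have hradicand := hall_radicand_add_sq hv
  have hgap : (7 * √(1 + 8 * v) - 15) ^ 2 / 16 = 0 := by rw [hs]; norm_num
  rw [hgap, add_zero] at hradicand
  unfold hallF
  rw [hradicand, sqrt_sq (by linarith)]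
  ring

lemma sqrt_one_add_eight_mul_twentytwo_div_fortynine : √(1 + 8 * (22 / 49 : ℝ)) = 15 / 7 := by
  rw [sqrt_eq_iff_eq_sq (by norm_num) (by norm_num)]
  norm_num

/-- The function `F(v) = √(49v² + 105λ₀(v)) − 7v` attains its maximum value
`11/2` at `v = 22/49`, recovering Hall's bound `Λ ≥ √(11/2)`. -/
theorem hall_optimization :
    (Real.sqrt (49 * (22 / 49 : ℝ) ^ 2 +
        105 * ((1 + 4 * (22 / 49 : ℝ) + Real.sqrt (1 + 8 * (22 / 49 : ℝ))) / 8)) -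
      7 * (22 / 49 : ℝ) = 11 / 2) ∧
    ∀ v : ℝ, 0 ≤ v →
      Real.sqrt (49 * v ^ 2 + 105 * ((1 + 4 * v + Real.sqrt (1 + 8 * v)) / 8)) - 7 * v ≤
        11 / 2 :=
  ⟨hallF_eq_of_sqrt_eq (by norm_num) sqrt_one_add_eight_mul_twentytwo_div_fortynine,
    fun _ hv => hallF_le (by linarith)⟩
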